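/- Let G be a connected simple graph with root r and let H be a connected graph obtained by deleting an edge of DFS(G) from G. Then κ(H, DFS(H)) = g - 1, where g = |E(G)| - |V(G)| + 1 is the circuit rank of G. -/

import Mathlib

open Finset

namespace PFG

variable {n : ℕ}

/-- `deg_{Sᶜ}(i)`: the number of edges `{i,j}` of `G` with `j ∉ S`. -/
noncomputable def sDeg (G : SimpleGraph (Fin (n+1))) (S : Finset (Fin (n+1))) (i : Fin (n+1)) : ℕ :=
  Set.ncard {j : Fin (n+1) | G.Adj i j ∧ j ∉ S}

/-- `P` is a parking function for `G` with respect to the root `r`: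
for every nonempty `S ⊆ V \ {r}` there is `i ∈ S` with `P i < deg_{Sᶜ}(i)`. -/
def IsParkingFunction (G : SimpleGraph (Fin (n+1))) (r : Fin (n+1))
    (P : Fin (n+1) → ℕ) : Prop :=
  ∀ S : Finset (Fin (n+1)), S.Nonempty → r ∉ S → ∃ i ∈ S, P i < sDeg G S i

/-- The degree of a parking function: the sum of its values over non-root vertices. -/
def degPF (r : Fin (n+1)) (P : Fin (n+1) → ℕ) : ℕ := ∑ v ∈ univ.erase r, P v

/-- A spanning tree of `G` rooted at `r`, encoded by its parent function:
each non-root vertex is adjacent (in `G`) to its parent, and iterating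
the parent map from any vertex reaches the root. -/
structure RootedSpanningTree (G : SimpleGraph (Fin (n+1))) (r : Fin (n+1)) where
  parent : Fin (n+1) → Fin (n+1)
  parent_root : parent r = r
  adj_parent : ∀ v, v ≠ r → G.Adj (parent v) v
  reaches_root : ∀ v, ∃ k, parent^[k] v = r

/-- `i` is a (proper) ancestor of `j` in the rooted tree with parent map `par`. -/
def IsAncestor (par : Fin (n+1) → Fin (n+1)) (i j : Fin (n+1)) : Prop :=
  ∃ k, 0 < k ∧ par^[k] j = i

/-- An inversion: `i` is an ancestor of `j` and `i > j`. -/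
def IsInversion (par : Fin (n+1) → Fin (n+1)) (i j : Fin (n+1)) : Prop :=
  IsAncestor par i j ∧ j < i

/-- A κ-inversion: an inversion `(i,j)` such that moreover `i` is not the
root and the parent of `i` is adjacent to `j` in `G`. -/
def IsKappaInversion (G : SimpleGraph (Fin (n+1))) (r : Fin (n+1))
    (par : Fin (n+1) → Fin (n+1)) (i j : Fin (n+1)) : Prop :=
  IsAncestor par i j ∧ j < i ∧ i ≠ r ∧ G.Adj (par i) j

/-- the κ-number: the number of κ-inversions. -/
noncomputable def kappaNum (G : SimpleGraph (Fin (n+1))) (r : Fin (n+1))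
    (par : Fin (n+1) → Fin (n+1)) : ℕ :=
  Set.ncard {p : Fin (n+1) × Fin (n+1) | IsKappaInversion G r par p.1 p.2}

/-- the number of inversions. -/
noncomputable def invNum (par : Fin (n+1) → Fin (n+1)) : ℕ :=
  Set.ncard {p : Fin (n+1) × Fin (n+1) | IsInversion par p.1 p.2}

open Classical in
/-- The neighbors of `i` in `G`, listed in decreasing order. -/
noncomputable def nbrs (G : SimpleGraph (Fin (n+1))) (i : Fin (n+1)) : List (Fin (n+1)) :=
  ((univ.filter (fun j => G.Adj i j)).sort (· ≤ ·)).reverse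

/-- One step of depth-first search from vertex `i`: scan the neighbors of `i`
in decreasing order; each unvisited neighbor `j` is visited, gets parent `i`,
and the search recurses from `j`.  The state is the pair
(visited vertices, parent map). -/
noncomputable def dfsStep (G : SimpleGraph (Fin (n+1))) :
    ℕ → Fin (n+1) → Finset (Fin (n+1)) × (Fin (n+1) → Fin (n+1)) →
      Finset (Fin (n+1)) × (Fin (n+1) → Fin (n+1))
  | 0, _, st => st
  | (fuel+1), i, st =>
      (nbrs G i).foldl
        (fun st j =>
          if j ∈ st.1 then st
          else dfsStep G fuel j (insert j st.1, Function.update st.2 j i)) st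

/-- The parent map of the depth-first search tree of `G` rooted at `r`,
visiting neighbors in decreasing numerical order. -/
noncomputable def dfsParent (G : SimpleGraph (Fin (n+1))) (r : Fin (n+1)) :
    Fin (n+1) → Fin (n+1) :=
  (dfsStep G (n+1) r ({r}, fun _ => r)).2

/-- The set of edges of the rooted tree given by parent map `par`. -/
def treeEdges (r : Fin (n+1)) (par : Fin (n+1) → Fin (n+1)) : Set (Sym2 (Fin (n+1))) :=
  {e | ∃ v, v ≠ r ∧ e = s(par v, v)}

end PFG

/-!
For a connected graph `X`, the tree edges of `T = DFS(X)` number `|V| - 1`, and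
`(i, j) ↦ {parent i, j}` is a bijection from the κ-inversions of `T` onto the non-tree edges:
every edge of `X` joins a vertex to one of its `T`-ancestors, and for a non-tree edge `{u, w}`
with `u` an ancestor of `w`, the child `i` of `u` on the path to `w` satisfies `w < i`, because
DFS explores the neighbours of `u` in decreasing order and `w` was still unvisited when `i` was
chosen. Hence `|E(X)| = κ(X, DFS(X)) + |V| - 1`. Applied to `X = H`, which is connected and has
one edge fewer than `G`, this gives `κ(H, DFS(H)) = |E(G)| - |V|`.
-/

open Function

theorem Function.IsPeriodicPt.eq_of_iterate_eq_of_isFixedPt {α : Type*} {f : α → α} {x r : α}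
    {k m : ℕ} (hv : IsPeriodicPt f k x) (hk : 0 < k) (hr : IsFixedPt f r) (hm : f^[m] x = r) :
    x = r :=
  calc x = f^[k * m - m + m] x := by
        rw [Nat.sub_add_cancel (Nat.le_mul_of_pos_left m hk)]
        exact (hv.mul_const m).eq.symm
    _ = r := by rw [iterate_add_apply, hm, iterate_fixed hr]

namespace PFG

section ParentMap

variable {α : Type*}

def ReachesThrough (par : α → α) (D : Set α) (x j : α) : Prop :=
  ∃ k, 0 < k ∧ par^[k] j = x ∧ ∀ m, 0 < m → m < k → par^[m] j ∈ D

variable {par par' : α → α} {D D' A S : Set α} {x j s₀ r : α}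

namespace ReachesThrough

lemma of_apply_eq (h : par j = x) : ReachesThrough par D x j :=
  ⟨1, one_pos, h, fun _ h₀ h₁ => absurd h₁ (by omega)⟩

lemma mono (h : ReachesThrough par D x j) (hD : D ⊆ D') : ReachesThrough par D' x j :=
  let ⟨k, hk, hkx, hmid⟩ := h
  ⟨k, hk, hkx, fun m h₀ hm => hD (hmid m h₀ hm)⟩

lemma of_eqOn (h : ReachesThrough par D x j) (hDS : D ⊆ S) (hj : j ∈ S)
    (heq : S.EqOn par' par) : ReachesThrough par' D x j := by
  obtain ⟨k, hk, hkx, hmid⟩ := h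
  have hiter : ∀ m ≤ k, par'^[m] j = par^[m] j := by
    intro m hm
    induction m with
    | zero => rfl
    | succ m ih =>
      rw [iterate_succ_apply', iterate_succ_apply', ih (by omega)]
      rcases Nat.eq_zero_or_pos m with rfl | h₀
      · exact heq hj
      · exact heq (hDS (hmid m h₀ (by omega)))
  exact ⟨k, hk, (hiter k le_rfl).trans hkx, fun m h₀ hm => hiter m hm.le ▸ hmid m h₀ hm⟩

lemma apply (h : ReachesThrough par D x j) (hD : D ⊆ D') (hx : x ∈ D') :
    ReachesThrough par D' (par x) j := by
  obtain ⟨k, hk, hkx, hmid⟩ := h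
  refine ⟨k + 1, k.succ_pos, by rw [iterate_succ_apply', hkx], fun m h₀ hm => ?_⟩
  rcases (Nat.lt_succ_iff.mp hm).lt_or_eq with hm | rfl
  · exact hD (hmid m h₀ hm)
  · rwa [hkx]

lemma apply_mem_or_eq (h : ReachesThrough par D x j) : par j ∈ D ∨ par j = x := by
  obtain ⟨k, hk, hkx, hmid⟩ := h
  rcases (Nat.succ_le_of_lt hk).lt_or_eq with h₁ | rfl
  · exact Or.inl (hmid 1 one_pos h₁)
  · exact Or.inr hkx

/-- The chain cannot pass through `s₀` before its end: the step after `s₀` leaves `D`. -/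
lemma restrict (hA : ∀ v ∈ A, par v ∈ A ∨ par v = s₀) (hs₀ : par s₀ ∉ D) (hx : x ∈ D)
    (hj : j ∈ A) (h : ReachesThrough par D x j) :
    (x ∈ A ∨ x = s₀) ∧ ReachesThrough par A x j := by
  obtain ⟨k, hk, hkx, hmid⟩ := h
  have hstay : ∀ m < k, par^[m] j ∈ A := by
    intro m
    induction m with
    | zero => exact fun _ => hj
    | succ m ih =>
      intro hm
      rw [iterate_succ_apply']
      refine (hA _ (ih (by omega))).resolve_right fun hs => hs₀ ?_
      have h₂ : par^[m + 2] j = par s₀ := by rw [iterate_succ_apply', iterate_succ_apply', hs]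
      rcases (show m + 2 ≤ k by omega).lt_or_eq with hlt | heq
      · exact h₂ ▸ hmid (m + 2) (by omega) hlt
      · rwa [← h₂, heq, hkx]
  refine ⟨?_, k, hk, hkx, fun m _ hm => hstay m hm⟩
  obtain ⟨k, rfl⟩ := Nat.exists_eq_add_one_of_ne_zero hk.ne'
  rw [← hkx, iterate_succ_apply']
  exact hA _ (hstay k k.lt_succ_self)

end ReachesThrough

lemma reachesThrough_ne_of_iterate_eq (hr : par r = r) (hx : x ≠ r) {k : ℕ} (hk : 0 < k)
    (hkx : par^[k] j = x) : ReachesThrough par {v | v ≠ r} x j := by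
  refine ⟨k, hk, hkx, fun m _ hm hmr => hx ?_⟩
  rw [← hkx, ← Nat.sub_add_cancel hm.le, iterate_add_apply, hmr, iterate_fixed hr]

end ParentMap

variable {n : ℕ}

namespace RootedSpanningTree

variable {X : SimpleGraph (Fin (n + 1))} {r : Fin (n + 1)} (T : RootedSpanningTree X r)

lemma eq_root_of_iterate_eq {v : Fin (n + 1)} {k : ℕ} (hk : 0 < k) (hv : T.parent^[k] v = v) :
    v = r :=
  let ⟨_, hm⟩ := T.reaches_root v
  Function.IsPeriodicPt.eq_of_iterate_eq_of_isFixedPt hv hk T.parent_root hm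

lemma eq_of_iterate_eq_of_parent_eq {b b' : Fin (n + 1)} {d : ℕ} (hd : T.parent^[d] b = b')
    (hpar : T.parent b = T.parent b') (hb' : b' ≠ r) : b = b' := by
  rcases d with _ | d
  · exact hd
  · have hcyc : T.parent^[d + 1] (T.parent b) = T.parent b := by
      rw [(Commute.iterate_self T.parent (d + 1)).eq, hd, hpar]
    have hroot := T.eq_root_of_iterate_eq d.succ_pos hcyc
    refine absurd ?_ hb'
    rw [← hd, iterate_succ_apply, hroot, iterate_fixed T.parent_root]

lemma injOn_parent_iterate (z : Fin (n + 1)) :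
    Set.InjOn T.parent {b | b ≠ r ∧ ∃ m, T.parent^[m] z = b} := by
  have key : ∀ {b b' m m'}, T.parent^[m] z = b → T.parent^[m'] z = b' → m ≤ m' →
      T.parent b = T.parent b' → b' ≠ r → b = b' := by
    intro b b' m m' hb hb' hmm hpar hb'r
    refine T.eq_of_iterate_eq_of_parent_eq (d := m' - m) ?_ hpar hb'r
    rw [← hb, ← iterate_add_apply, Nat.sub_add_cancel hmm, hb']
  rintro b ⟨hbr, m, hb⟩ b' ⟨hb'r, m', hb'⟩ hpar
  rcases le_total m m' with hmm | hmm
  · exact key hb hb' hmm hpar hb'r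
  · exact (key hb' hb hmm hpar.symm hbr).symm

lemma exists_child_isAncestor {u w : Fin (n + 1)} (h : IsAncestor T.parent u w)
    (hw : T.parent w ≠ u) : ∃ i, T.parent i = u ∧ i ≠ r ∧ IsAncestor T.parent i w := by
  classical
  have hspec := Nat.find_spec h
  have hmin : ∀ m < Nat.find h, ¬(0 < m ∧ T.parent^[m] w = u) := fun m hm => Nat.find_min h hm
  obtain ⟨k, hk⟩ : ∃ k, Nat.find h = k + 2 := by
    have : Nat.find h ≠ 1 := fun h₁ => hw (by simpa [h₁] using hspec.2)
    exact ⟨Nat.find h - 2, by omega⟩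
  rw [hk] at hspec hmin
  refine ⟨T.parent^[k + 1] w, by rw [← iterate_succ_apply' T.parent]; exact hspec.2,
    fun hr => hmin (k + 1) (by omega) ⟨k.succ_pos, ?_⟩, k + 1, k.succ_pos, rfl⟩
  rw [hr, ← hspec.2, iterate_succ_apply', hr, T.parent_root]

lemma treeEdges_subset_edgeSet : treeEdges r T.parent ⊆ X.edgeSet := by
  rintro _ ⟨v, hv, rfl⟩
  exact T.adj_parent v hv

lemma ncard_treeEdges : (treeEdges r T.parent).ncard = n := by
  have hinj : Set.InjOn (fun v => s(T.parent v, v)) {v | v ≠ r} := by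
    intro a ha b _ h
    rcases Sym2.eq_iff.mp h with ⟨-, hab⟩ | ⟨hab, hba⟩
    · exact hab
    · exact absurd (T.eq_root_of_iterate_eq (k := 2) two_pos (by
        show T.parent (T.parent a) = a
        rw [hab, ← hba])) ha
  have himage : treeEdges r T.parent = (fun v => s(T.parent v, v)) '' {v | v ≠ r} := by
    ext e
    simp [treeEdges, eq_comm]
  rw [himage, hinj.ncard_image, Set.ncard_eq_toFinset_card']
  simp [Finset.filter_ne']

def inversionEdge (p : Fin (n + 1) × Fin (n + 1)) : Sym2 (Fin (n + 1)) := s(T.parent p.1, p.2)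

lemma mapsTo_kappaInversions :
    Set.MapsTo T.inversionEdge {p | IsKappaInversion X r T.parent p.1 p.2}
      (X.edgeSet \ treeEdges r T.parent) := by
  rintro ⟨i, j⟩ ⟨⟨k, hk, hki⟩, hji, hir, hadj⟩
  refine ⟨hadj, ?_⟩
  rintro ⟨w, -, hw⟩
  rcases Sym2.eq_iff.mp hw with ⟨hpi, rfl⟩ | ⟨rfl, hjw⟩
  · exact hji.ne (T.eq_of_iterate_eq_of_parent_eq hki hpi.symm hir)
  · refine hir (T.eq_root_of_iterate_eq (k := k + 2) (by omega) ?_)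
    rw [iterate_add_apply, show T.parent^[2] i = j from hjw.symm, hki]

lemma injOn_kappaInversions :
    Set.InjOn T.inversionEdge {p | IsKappaInversion X r T.parent p.1 p.2} := by
  rintro ⟨i, j⟩ ⟨⟨k, -, hki⟩, -, hir, -⟩ ⟨i', j'⟩ ⟨⟨k', -, hki'⟩, -, hir', -⟩ h
  rcases Sym2.eq_iff.mp h with ⟨hpar, rfl⟩ | ⟨hij', hji'⟩
  · exact Prod.ext (T.injOn_parent_iterate j ⟨hir, k, hki⟩ ⟨hir', k', hki'⟩ hpar) rfl
  · have e₁ : T.parent^[k' + 1] i = i' := by rw [iterate_succ_apply, hij', hki']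
    have e₂ : T.parent^[k + 1] i' = i := by rw [iterate_succ_apply, ← hji', hki]
    refine absurd (T.eq_root_of_iterate_eq (k := k + 1 + (k' + 1)) (by omega) ?_) hir
    rw [iterate_add_apply, e₁, e₂]

structure IsDecreasingDfs : Prop where
  isAncestor_or_isAncestor :
    ∀ {u w}, X.Adj u w → IsAncestor T.parent u w ∨ IsAncestor T.parent w u
  lt_of_adj_parent : ∀ {x j}, x ≠ r → IsAncestor T.parent x j → X.Adj (T.parent x) j →
    T.parent j ≠ T.parent x → j < x

variable {T}

lemma IsDecreasingDfs.surjOn_kappaInversions (hT : T.IsDecreasingDfs) :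
    Set.SurjOn T.inversionEdge {p | IsKappaInversion X r T.parent p.1 p.2}
      (X.edgeSet \ treeEdges r T.parent) := by
  intro e ⟨he, hnt⟩
  induction e using Sym2.ind with | h u w => ?_
  wlog huw : IsAncestor T.parent u w generalizing u w
  · obtain ⟨p, hp, hpe⟩ := this (w := u) (u := w) (X.adj_symm he) (by rwa [Sym2.eq_swap])
      ((hT.isAncestor_or_isAncestor he).resolve_left huw)
    exact ⟨p, hp, hpe.trans Sym2.eq_swap⟩
  have hwr : w ≠ r := by
    rintro rfl
    obtain ⟨k, -, hk⟩ := huw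
    rw [iterate_fixed T.parent_root] at hk
    exact X.loopless.irrefl _ (hk ▸ he)
  have hpw : T.parent w ≠ u := fun h => hnt ⟨w, hwr, by rw [h]⟩
  obtain ⟨i, rfl, hir, hiw⟩ := T.exists_child_isAncestor huw hpw
  exact ⟨(i, w), ⟨hiw, hT.lt_of_adj_parent hir hiw he hpw, hir, he⟩, rfl⟩

lemma IsDecreasingDfs.ncard_edgeSet (hT : T.IsDecreasingDfs) :
    X.edgeSet.ncard = kappaNum X r T.parent + n := by
  have hbij : Set.BijOn T.inversionEdge {p | IsKappaInversion X r T.parent p.1 p.2}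
      (X.edgeSet \ treeEdges r T.parent) :=
    ⟨T.mapsTo_kappaInversions, T.injOn_kappaInversions, hT.surjOn_kappaInversions⟩
  rw [kappaNum, hbij.ncard_eq, ← Set.ncard_sdiff_add_ncard_of_subset T.treeEdges_subset_edgeSet,
    T.ncard_treeEdges]

end RootedSpanningTree

variable {G : SimpleGraph (Fin (n + 1))}

lemma ReachesThrough.isAncestor {par : Fin (n + 1) → Fin (n + 1)} {D : Set (Fin (n + 1))}
    {x j : Fin (n + 1)} (h : ReachesThrough par D x j) : IsAncestor par x j :=
  let ⟨k, hk, hkx, _⟩ := h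
  ⟨k, hk, hkx⟩

lemma mem_nbrs {i j : Fin (n + 1)} : j ∈ nbrs G i ↔ G.Adj i j := by
  classical
  simp [nbrs]

lemma nbrs_pairwise_gt (G : SimpleGraph (Fin (n + 1))) (i : Fin (n + 1)) :
    (nbrs G i).Pairwise (· > ·) := by
  classical
  exact List.pairwise_reverse.mpr (by simpa using (sortedLT_sort _).pairwise)

abbrev DfsState (n : ℕ) := Finset (Fin (n + 1)) × (Fin (n + 1) → Fin (n + 1))

/-- The invariant of `dfsStep`: a call from `i` turning `st` into `st'` hangs the newly visited
vertices `st'.1 \ st.1` below `i` as a decreasing DFS forest (cf. `IsDecreasingDfs`), leaving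
the old parents unchanged. -/
structure DfsSpec (G : SimpleGraph (Fin (n + 1))) (i : Fin (n + 1)) (st st' : DfsState n) :
    Prop where
  visited_mono : st.1 ⊆ st'.1
  parent_eq : ∀ v ∈ st.1, st'.2 v = st.2 v
  parent_mem : ∀ v, st'.2 v ∈ st'.1
  adj_parent : ∀ v ∈ st'.1 \ st.1, G.Adj (st'.2 v) v
  reaches : ∀ v ∈ st'.1 \ st.1, ReachesThrough st'.2 ↑(st'.1 \ st.1) i v
  adj_mem : ∀ v ∈ st'.1 \ st.1, ∀ w, G.Adj v w → w ∈ st'.1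
  reaches_or_reaches : ∀ u ∈ st'.1 \ st.1, ∀ w ∈ st'.1 \ st.1, G.Adj u w →
    ReachesThrough st'.2 ↑(st'.1 \ st.1) u w ∨ ReachesThrough st'.2 ↑(st'.1 \ st.1) w u
  lt_of_adj_parent : ∀ x ∈ st'.1 \ st.1, ∀ j ∈ st'.1 \ st.1,
    ReachesThrough st'.2 ↑(st'.1 \ st.1) x j → G.Adj (st'.2 x) j → st'.2 j ≠ st'.2 x → j < x

namespace DfsSpec

variable {i : Fin (n + 1)} {st st' st₁ st₂ st₃ : DfsState n}

lemma refl (hpar : ∀ v, st.2 v ∈ st.1) : DfsSpec G i st st where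
  visited_mono := subset_rfl
  parent_eq _ _ := rfl
  parent_mem := hpar
  adj_parent := by simp
  reaches := by simp
  adj_mem := by simp
  reaches_or_reaches := by simp
  lt_of_adj_parent := by simp

lemma apply_mem_sdiff_or_eq (h : DfsSpec G i st st') {v : Fin (n + 1)} (hv : v ∈ st'.1 \ st.1) :
    st'.2 v ∈ st'.1 \ st.1 ∨ st'.2 v = i :=
  (h.reaches v hv).apply_mem_or_eq

lemma restrict (h : DfsSpec G i st st') {par : Fin (n + 1) → Fin (n + 1)}
    (hpar : Set.EqOn par st'.2 ↑st'.1) {D : Set (Fin (n + 1))} (hpiD : par i ∉ D)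
    {x j : Fin (n + 1)} (hx : x ∈ D) (hj : j ∈ st'.1 \ st.1) (hxj : ReachesThrough par D x j) :
    (x ∈ st'.1 \ st.1 ∨ x = i) ∧ ReachesThrough st'.2 ↑(st'.1 \ st.1) x j := by
  have hA : ∀ v ∈ (↑(st'.1 \ st.1) : Set (Fin (n + 1))), par v ∈ (↑(st'.1 \ st.1) : Set _) ∨
      par v = i := fun v hv => by
    rw [hpar (mem_sdiff.1 hv).1]
    exact h.apply_mem_sdiff_or_eq hv
  obtain ⟨hx', hxj'⟩ := hxj.restrict hA hpiD hx hj
  exact ⟨hx', hxj'.of_eqOn (coe_subset.2 sdiff_subset) (mem_sdiff.1 hj).1 hpar.symm⟩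

lemma trans (h₁ : DfsSpec G i st₁ st₂) (h₂ : DfsSpec G i st₂ st₃) (hi : i ∈ st₁.1)
    (hpi : st₁.2 i ∈ st₁.1) : DfsSpec G i st₁ st₃ := by
  have hsub₁ : st₂.1 \ st₁.1 ⊆ st₃.1 \ st₁.1 := sdiff_subset_sdiff h₂.visited_mono subset_rfl
  have hsub₂ : st₃.1 \ st₂.1 ⊆ st₃.1 \ st₁.1 := sdiff_subset_sdiff subset_rfl h₁.visited_mono
  have hsplit : ∀ v ∈ st₃.1 \ st₁.1, v ∈ st₃.1 \ st₂.1 ∨ v ∈ st₂.1 \ st₁.1 := by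
    intro v hv
    by_cases hv₂ : v ∈ st₂.1 <;> simp_all
  have hreach₁ : ∀ {x j}, j ∈ st₂.1 \ st₁.1 → ReachesThrough st₂.2 ↑(st₂.1 \ st₁.1) x j →
      ReachesThrough st₃.2 ↑(st₃.1 \ st₁.1) x j := fun hj hxj =>
    (hxj.of_eqOn (coe_subset.2 sdiff_subset) (mem_sdiff.1 hj).1 h₂.parent_eq).mono
      (coe_subset.2 hsub₁)
  have hparent : ∀ v ∈ st₁.1, st₃.2 v = st₁.2 v := fun v hv =>
    (h₂.parent_eq v (h₁.visited_mono hv)).trans (h₁.parent_eq v hv)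
  have hiD : i ∉ (↑(st₃.1 \ st₁.1) : Set (Fin (n + 1))) := fun h => (mem_sdiff.1 h).2 hi
  have hpiD : st₃.2 i ∉ (↑(st₃.1 \ st₁.1) : Set (Fin (n + 1))) := by
    rw [hparent i hi]
    exact fun h => (mem_sdiff.1 h).2 hpi
  refine ⟨h₁.visited_mono.trans h₂.visited_mono, hparent, h₂.parent_mem, ?_, ?_, ?_, ?_, ?_⟩
  · intro v hv
    rcases hsplit v hv with hv | hv
    · exact h₂.adj_parent v hv
    · rw [h₂.parent_eq v (mem_sdiff.1 hv).1]
      exact h₁.adj_parent v hv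
  · intro v hv
    rcases hsplit v hv with hv | hv
    · exact (h₂.reaches v hv).mono (coe_subset.2 hsub₂)
    · exact hreach₁ hv (h₁.reaches v hv)
  · intro v hv w hw
    rcases hsplit v hv with hv | hv
    · exact h₂.adj_mem v hv w hw
    · exact h₂.visited_mono (h₁.adj_mem v hv w hw)
  · intro u hu w hw huw
    rcases hsplit u hu with hu | hu <;> rcases hsplit w hw with hw | hw
    · exact (h₂.reaches_or_reaches u hu w hw huw).imp (·.mono (coe_subset.2 hsub₂))
        (·.mono (coe_subset.2 hsub₂))
    · exact absurd (h₁.adj_mem w hw u huw.symm) (mem_sdiff.1 hu).2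
    · exact absurd (h₁.adj_mem u hu w huw) (mem_sdiff.1 hw).2
    · exact (h₁.reaches_or_reaches u hu w hw huw).imp (hreach₁ hw) (hreach₁ hu)
  · intro x hx j hj hxj hadj hne
    rcases hsplit j hj with hj | hj
    · obtain ⟨hx | rfl, hxj⟩ := h₂.restrict (fun _ _ => rfl) hpiD hx hj hxj
      · exact h₂.lt_of_adj_parent x hx j hj hxj hadj hne
      · exact absurd hx hiD
    · obtain ⟨hx | rfl, hxj⟩ := h₁.restrict h₂.parent_eq hpiD hx hj hxj
      · rw [h₂.parent_eq x (mem_sdiff.1 hx).1] at hadj hne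
        rw [h₂.parent_eq j (mem_sdiff.1 hj).1] at hne
        exact h₁.lt_of_adj_parent x hx j hj hxj hadj hne
      · exact absurd hx hiD

lemma visit_child {cur out : DfsState n} {s : Fin (n + 1)}
    (h : DfsSpec G s (insert s cur.1, update cur.2 s i) out) (hnbrs : ∀ w, G.Adj s w → w ∈ out.1)
    (hs : s ∉ cur.1) (hi : i ∈ cur.1) (hadj : G.Adj i s)
    (hlt : ∀ j, G.Adj i j → j ∉ cur.1 → j ≠ s → j < s) : DfsSpec G i cur out := by
  have hsub : out.1 \ insert s cur.1 ⊆ out.1 \ cur.1 :=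
    sdiff_subset_sdiff subset_rfl (subset_insert _ _)
  have hsD : s ∈ out.1 \ cur.1 := mem_sdiff.2 ⟨h.visited_mono (mem_insert_self _ _), hs⟩
  have hsplit : ∀ v ∈ out.1 \ cur.1, v = s ∨ v ∈ out.1 \ insert s cur.1 := by
    intro v hv
    by_cases hvs : v = s <;> simp_all
  have hps : out.2 s = i := by
    rw [h.parent_eq s (mem_insert_self _ _)]
    exact update_self _ _ _
  have hiD : i ∉ out.1 \ cur.1 := fun h => (mem_sdiff.1 h).2 hi
  refine ⟨(subset_insert _ _).trans h.visited_mono, fun v hv => ?_, h.parent_mem,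
    ?_, ?_, ?_, ?_, ?_⟩
  · rw [h.parent_eq v (mem_insert_of_mem hv)]
    exact update_of_ne (ne_of_mem_of_not_mem hv hs) _ _
  · intro v hv
    rcases hsplit v hv with rfl | hv
    · exact hps ▸ hadj
    · exact h.adj_parent v hv
  · intro v hv
    rcases hsplit v hv with rfl | hv
    · exact .of_apply_eq hps
    · exact hps ▸ (h.reaches v hv).apply (coe_subset.2 hsub) hsD
  · intro v hv
    rcases hsplit v hv with rfl | hv
    · exact hnbrs
    · exact h.adj_mem v hv
  · intro u hu w hw huw
    rcases hsplit u hu with rfl | hu <;> rcases hsplit w hw with rfl | hw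
    · exact absurd huw (G.loopless.irrefl _)
    · exact .inl ((h.reaches w hw).mono (coe_subset.2 hsub))
    · exact .inr ((h.reaches u hu).mono (coe_subset.2 hsub))
    · exact (h.reaches_or_reaches u hu w hw huw).imp (·.mono (coe_subset.2 hsub))
        (·.mono (coe_subset.2 hsub))
  · intro x hx j hj hxj hadj' hne
    rcases hsplit j hj with rfl | hj
    · rcases hxj.apply_mem_or_eq with hmem | heq
      · exact absurd (hps ▸ hmem) hiD
      · exact absurd (hps ▸ heq ▸ hx) hiD
    · obtain ⟨hx | rfl, hxj⟩ := h.restrict (fun _ _ => rfl) (hps ▸ hiD) hx hj hxj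
      · exact h.lt_of_adj_parent x hx j hj hxj hadj' hne
      · -- `j` was still an unvisited neighbour of `i` when DFS chose the child `x` of `i`
        have hjc : j ∉ insert x cur.1 := (mem_sdiff.1 hj).2
        exact hlt j (hps ▸ hadj') (fun h => hjc (mem_insert_of_mem h))
          (fun h => hjc (h ▸ mem_insert_self _ _))

end DfsSpec

noncomputable def dfsVisit (G : SimpleGraph (Fin (n + 1))) (fuel : ℕ) (i : Fin (n + 1))
    (st : DfsState n) (j : Fin (n + 1)) : DfsState n :=
  if j ∈ st.1 then st else dfsStep G fuel j (insert j st.1, update st.2 j i)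

lemma dfsStep_succ (fuel : ℕ) (i : Fin (n + 1)) (st : DfsState n) :
    dfsStep G (fuel + 1) i st = (nbrs G i).foldl (dfsVisit G fuel i) st :=
  rfl

lemma foldl_dfsVisit_spec {fuel : ℕ}
    (ih : ∀ j (st : DfsState n), j ∈ st.1 → (∀ v, st.2 v ∈ st.1) → n + 2 ≤ fuel + #st.1 →
      DfsSpec G j st (dfsStep G fuel j st) ∧ ∀ w, G.Adj j w → w ∈ (dfsStep G fuel j st).1)
    {i : Fin (n + 1)} {L : List (Fin (n + 1))} (hL : ∀ y ∈ L, G.Adj i y)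
    (hsorted : L.Pairwise (· > ·)) (cur : DfsState n)
    (hcov : ∀ y, G.Adj i y → y ∉ cur.1 → y ∈ L) (hi : i ∈ cur.1) (hpar : ∀ v, cur.2 v ∈ cur.1)
    (hfuel : n + 2 ≤ fuel + 1 + #cur.1) :
    DfsSpec G i cur (L.foldl (dfsVisit G fuel i) cur) ∧
      ∀ w, G.Adj i w → w ∈ (L.foldl (dfsVisit G fuel i) cur).1 := by
  induction L generalizing cur with
  | nil => exact ⟨.refl hpar, fun w hw => by_contra fun h => by simpa using hcov w hw h⟩
  | cons s L ih' =>
    have hL' : ∀ y ∈ L, G.Adj i y := fun y hy => hL y (List.mem_cons_of_mem _ hy)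
    rw [List.foldl_cons, dfsVisit]
    split_ifs with hs
    · refine ih' hL' hsorted.of_cons cur (fun y hy hy' => ?_) hi hpar hfuel
      exact (List.mem_cons.mp (hcov y hy hy')).resolve_left (by rintro rfl; exact hy' hs)
    · have hparc : ∀ v, update cur.2 s i v ∈ insert s cur.1 := fun v => by
        rcases eq_or_ne v s with rfl | hv
        · simpa using .inr hi
        · simpa [hv] using .inr (hpar v)
      obtain ⟨hc, hcn⟩ := ih s (insert s cur.1, update cur.2 s i) (mem_insert_self _ _) hparc
        (by rw [card_insert_of_notMem hs]; omega)
      set out := dfsStep G fuel s (insert s cur.1, update cur.2 s i)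
      have hsub : cur.1 ⊆ out.1 := (subset_insert _ _).trans hc.visited_mono
      have hchild := hc.visit_child hcn hs hi (hL s List.mem_cons_self) fun j hj hjc hjs =>
        List.rel_of_pairwise_cons hsorted ((List.mem_cons.mp (hcov j hj hjc)).resolve_left hjs)
      have hcov' : ∀ y, G.Adj i y → y ∉ out.1 → y ∈ L := fun y hy hy' =>
        (List.mem_cons.mp (hcov y hy fun h => hy' (hsub h))).resolve_left
          (by rintro rfl; exact hy' (hc.visited_mono (mem_insert_self _ _)))
      obtain ⟨hr, hrn⟩ := ih' hL' hsorted.of_cons out hcov' (hsub hi) hc.parent_mem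
        (by have := card_le_card hsub; omega)
      exact ⟨hchild.trans hr hi (hpar i), hrn⟩

lemma dfsStep_spec (fuel : ℕ) (i : Fin (n + 1)) (st : DfsState n) (hi : i ∈ st.1)
    (hpar : ∀ v, st.2 v ∈ st.1) (hfuel : n + 2 ≤ fuel + #st.1) :
    DfsSpec G i st (dfsStep G fuel i st) ∧ ∀ w, G.Adj i w → w ∈ (dfsStep G fuel i st).1 := by
  induction fuel generalizing i st with
  | zero =>
    have := card_le_univ st.1
    simp only [Fintype.card_fin] at this
    omega
  | succ fuel ih =>
    rw [dfsStep_succ]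
    exact foldl_dfsVisit_spec ih (fun y hy => mem_nbrs.mp hy) (nbrs_pairwise_gt G i) st
      (fun y hy _ => mem_nbrs.mpr hy) hi hpar hfuel

section DfsTree

variable (X : SimpleGraph (Fin (n + 1))) (r : Fin (n + 1))

lemma dfsStep_root_spec :
    DfsSpec X r ({r}, fun _ => r) (dfsStep X (n + 1) r ({r}, fun _ => r)) ∧
      ∀ w, X.Adj r w → w ∈ (dfsStep X (n + 1) r ({r}, fun _ => r)).1 :=
  dfsStep_spec (n + 1) r _ (mem_singleton_self r) (fun _ => mem_singleton_self r) (by simp)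

variable {X r}

lemma mem_dfsStep_sdiff_root (hX : X.Connected) {v : Fin (n + 1)} (hv : v ≠ r) :
    v ∈ (dfsStep X (n + 1) r ({r}, fun _ => r)).1 \ {r} := by
  obtain ⟨hspec, hroot⟩ := dfsStep_root_spec X r
  set S := (dfsStep X (n + 1) r ({r}, fun _ => r)).1
  have hclosed : ∀ u w, u ∈ S → X.Adj u w → w ∈ S := by
    intro u w hu huw
    rcases eq_or_ne u r with rfl | hur
    · exact hroot w huw
    · exact hspec.adj_mem u (mem_sdiff.2 ⟨hu, by simpa using hur⟩) w huw
  have hwalk : ∀ {a b} (p : X.Walk a b), a ∈ S → b ∈ S := by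
    intro a b p
    induction p with
    | nil => exact id
    | cons h _ ih => exact fun ha => ih (hclosed _ _ ha h)
  exact mem_sdiff.2 ⟨hwalk (hX.preconnected r v).some (hspec.visited_mono (mem_singleton_self r)),
    by simpa using hv⟩

variable (r) in
noncomputable def dfsTree (hX : X.Connected) : RootedSpanningTree X r where
  parent := dfsParent X r
  parent_root := (dfsStep_root_spec X r).1.parent_eq r (mem_singleton_self r)
  adj_parent _ hv := (dfsStep_root_spec X r).1.adj_parent _ (mem_dfsStep_sdiff_root hX hv)
  reaches_root v := by
    rcases eq_or_ne v r with rfl | hv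
    · exact ⟨0, rfl⟩
    · obtain ⟨k, -, hk, -⟩ := (dfsStep_root_spec X r).1.reaches v (mem_dfsStep_sdiff_root hX hv)
      exact ⟨k, hk⟩

lemma dfsTree_isDecreasingDfs (hX : X.Connected) : (dfsTree r hX).IsDecreasingDfs := by
  have hspec := (dfsStep_root_spec X r).1
  have hmem := fun {v} (hv : v ≠ r) => mem_dfsStep_sdiff_root hX hv
  constructor
  · intro u w huw
    rcases eq_or_ne u r with rfl | hur
    · exact .inl (hspec.reaches w (hmem huw.ne')).isAncestor
    rcases eq_or_ne w r with rfl | hwr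
    · exact .inr (hspec.reaches u (hmem huw.ne)).isAncestor
    exact (hspec.reaches_or_reaches u (hmem hur) w (hmem hwr) huw).imp
      ReachesThrough.isAncestor ReachesThrough.isAncestor
  · rintro x j hx ⟨k, hk, hkx⟩ hadj hne
    have hjr : j ≠ r := by
      intro hj
      rw [hj, iterate_fixed (dfsTree r hX).parent_root] at hkx
      exact hx hkx.symm
    exact hspec.lt_of_adj_parent x (hmem hx) j (hmem hjr)
      ((reachesThrough_ne_of_iterate_eq (dfsTree r hX).parent_root hx hk hkx).mono
        fun v hv => hmem hv) hadj hne

end DfsTree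

end PFG

theorem kappa_dfs_delete_edge_general {n : ℕ}
    (G : SimpleGraph (Fin (n+1))) (r : Fin (n+1))
    (v : Fin (n+1)) (hv : v ≠ r)
    (H : SimpleGraph (Fin (n+1)))
    (hH : H = G.deleteEdges {s(PFG.dfsParent G r v, v)})
    (hHconn : H.Connected) :
    PFG.kappaNum H r (PFG.dfsParent H r) + (n + 1) = G.edgeSet.ncard := by
  have hG : G.Connected := hHconn.mono (hH ▸ G.deleteEdges_le _)
  have hedge : s(PFG.dfsParent G r v, v) ∈ G.edgeSet := (PFG.dfsTree r hG).adj_parent v hv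
  have hcount : H.edgeSet.ncard = PFG.kappaNum H r (PFG.dfsParent H r) + n :=
    (PFG.dfsTree_isDecreasingDfs hHconn).ncard_edgeSet
  rw [← Set.ncard_sdiff_singleton_add_one hedge, ← SimpleGraph.edgeSet_deleteEdges, ← hH, hcount]
  omega

/-- If `H` is a connected graph obtained from `G` by deleting an edge of
`DFS(G)`, then `κ(H, DFS(H)) = g - 1` where `g = |E(G)| - |V(G)| + 1`
(stated additively: `κ(H, DFS(H)) + |V| = |E(G)|`). -/
theorem kappa_dfs_delete_edge {n : ℕ}
    (G : SimpleGraph (Fin (n+1))) (hG : G.Connected) (r : Fin (n+1))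
    (v : Fin (n+1)) (hv : v ≠ r)
    (H : SimpleGraph (Fin (n+1)))
    (hH : H = G.deleteEdges {s(PFG.dfsParent G r v, v)})
    (hHconn : H.Connected) :
    PFG.kappaNum H r (PFG.dfsParent H r) + (n + 1) = G.edgeSet.ncard :=
  kappa_dfs_delete_edge_general G r v hv H hH hHconn
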